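/- arXiv:2311.06574 — 3 statements merged into one kernel-verified Lean document; each statement's English description precedes it below -/
import Mathlib

section
/- Let V : ℕ → 𝔽^n be a sequence of vectors and let M(X) be a monic n×n matrix polynomial of degree m that annihilates V, and suppose no nonzero n×n matrix polynomial of degree strictly less than m annihilates V (i.e., M(X) is the matrix minimal polynomial of V). Then every n×n matrix polynomial P(X) that annihilates V is a left multiple of M(X): there exists an n×n matrix polynomial Q(X) with P(X) = Q(X)·M(X). -/
open Polynomial Matrix

/-- A matrix polynomial `P(X) = ∑ P_i X^i` annihilates the vector sequence `V` if
`∑ i, P_i ⬝ V (i + j) = 0` for every shift `j ≥ 0`. -/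
def Annihilates {𝔽 : Type*} [Field 𝔽] {n : ℕ}
    (P : Polynomial (Matrix (Fin n) (Fin n) 𝔽)) (V : ℕ → Fin n → 𝔽) : Prop :=
  ∀ j : ℕ, ∑ i ∈ Finset.range (P.natDegree + 1), P.coeff i *ᵥ V (i + j) = 0

section Aux

variable {𝔽 : Type*} [Field 𝔽] {n : ℕ} (V : ℕ → Fin n → 𝔽)

lemma ann_sum_ext (P : Polynomial (Matrix (Fin n) (Fin n) 𝔽)) {N : ℕ}
    (hN : P.natDegree < N) (j : ℕ) :
    ∑ i ∈ Finset.range N, P.coeff i *ᵥ V (i + j)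
      = ∑ i ∈ Finset.range (P.natDegree + 1), P.coeff i *ᵥ V (i + j) := by
  refine (Finset.sum_subset (Finset.range_subset_range.mpr hN) ?_).symm
  intro i _ hi
  simp only [Finset.mem_range, not_lt] at hi
  rw [P.coeff_eq_zero_of_natDegree_lt (by omega), Matrix.zero_mulVec]

lemma ann_of (P : Polynomial (Matrix (Fin n) (Fin n) 𝔽)) {N : ℕ}
    (hN : P.natDegree < N)
    (H : ∀ j, ∑ i ∈ Finset.range N, P.coeff i *ᵥ V (i + j) = 0) :
    Annihilates P V := fun j => by rw [← ann_sum_ext V P hN j]; exact H j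

lemma ann_to {P : Polynomial (Matrix (Fin n) (Fin n) 𝔽)} {N : ℕ}
    (hN : P.natDegree < N) (h : Annihilates P V) (j : ℕ) :
    ∑ i ∈ Finset.range N, P.coeff i *ᵥ V (i + j) = 0 := by
  rw [ann_sum_ext V P hN j]; exact h j

lemma ann_add {P Q : Polynomial (Matrix (Fin n) (Fin n) 𝔽)}
    (hP : Annihilates P V) (hQ : Annihilates Q V) : Annihilates (P + Q) V := by
  set N := max P.natDegree Q.natDegree + 1 with hNdef
  refine ann_of V _ (N := N) (lt_of_le_of_lt (natDegree_add_le P Q) (Nat.lt_succ_self _)) ?_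
  intro j
  simp only [coeff_add, Matrix.add_mulVec, Finset.sum_add_distrib]
  rw [ann_to V (by omega) hP j, ann_to V (by omega) hQ j, add_zero]

lemma ann_neg {P : Polynomial (Matrix (Fin n) (Fin n) 𝔽)}
    (hP : Annihilates P V) : Annihilates (-P) V := by
  refine ann_of V _ (N := P.natDegree + 1) (by rw [natDegree_neg]; exact Nat.lt_succ_self _) ?_
  intro j
  simp only [coeff_neg, Matrix.neg_mulVec, Finset.sum_neg_distrib]
  rw [hP j, neg_zero]

lemma ann_sub {P Q : Polynomial (Matrix (Fin n) (Fin n) 𝔽)}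
    (hP : Annihilates P V) (hQ : Annihilates Q V) : Annihilates (P - Q) V := by
  rw [sub_eq_add_neg]; exact ann_add V hP (ann_neg V hQ)

lemma ann_C_mul {P : Polynomial (Matrix (Fin n) (Fin n) 𝔽)}
    (A : Matrix (Fin n) (Fin n) 𝔽) (hP : Annihilates P V) :
    Annihilates (C A * P) V := by
  refine ann_of V _ (N := P.natDegree + 1)
    (lt_of_le_of_lt (natDegree_C_mul_le A P) (Nat.lt_succ_self _)) ?_
  intro j
  have : ∑ i ∈ Finset.range (P.natDegree + 1), (C A * P).coeff i *ᵥ V (i + j)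
      = A *ᵥ ∑ i ∈ Finset.range (P.natDegree + 1), P.coeff i *ᵥ V (i + j) := by
    rw [show (A *ᵥ ∑ i ∈ Finset.range (P.natDegree + 1), P.coeff i *ᵥ V (i + j))
        = Matrix.mulVecLin A (∑ i ∈ Finset.range (P.natDegree + 1), P.coeff i *ᵥ V (i + j))
        from rfl, map_sum]
    simp [coeff_C_mul, Matrix.mulVecLin_apply, Matrix.mulVec_mulVec]
  rw [this, hP j, Matrix.mulVec_zero]

lemma ann_mul_X {P : Polynomial (Matrix (Fin n) (Fin n) 𝔽)}
    (hP : Annihilates P V) : Annihilates (P * X) V := by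
  refine ann_of V _ (N := P.natDegree + 1 + 1)
    (lt_of_le_of_lt (natDegree_mul_le.trans (add_le_add le_rfl natDegree_X_le)) (Nat.lt_succ_self _)) ?_
  intro j
  rw [Finset.sum_range_succ']
  simp only [mul_coeff_zero, coeff_X_zero, mul_zero, Matrix.zero_mulVec, add_zero, coeff_mul_X]
  have : ∀ i ∈ Finset.range (P.natDegree + 1),
      P.coeff i *ᵥ V (i + 1 + j) = P.coeff i *ᵥ V (i + (j + 1)) := by
    intro i _; rw [show i + 1 + j = i + (j + 1) by omega]
  rw [Finset.sum_congr rfl this, hP (j + 1)]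

lemma ann_mul_X_pow {P : Polynomial (Matrix (Fin n) (Fin n) 𝔽)}
    (hP : Annihilates P V) (k : ℕ) : Annihilates (P * X ^ k) V := by
  induction k with
  | zero => simpa using hP
  | succ k ih => rw [pow_succ, ← mul_assoc]; exact ann_mul_X V ih

lemma ann_mul {M : Polynomial (Matrix (Fin n) (Fin n) 𝔽)}
    (hM : Annihilates M V) (Q : Polynomial (Matrix (Fin n) (Fin n) 𝔽)) :
    Annihilates (Q * M) V := by
  induction Q using Polynomial.induction_on' with
  | add p q hp hq => rw [add_mul]; exact ann_add V hp hq
  | monomial k A =>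
      have h : (monomial k A) * M = (C A * M) * X ^ k := by
        rw [← C_mul_X_pow_eq_monomial, mul_assoc, X_pow_mul, ← mul_assoc]
      rw [h]; exact ann_mul_X_pow V (ann_C_mul V A hM) k

end Aux

/-- If `M(X)` is the matrix minimal polynomial of the vector sequence `V` (a monic
annihilating matrix polynomial of degree `m` such that no nonzero matrix polynomial of
degree `< m` annihilates `V`), then every annihilating matrix polynomial `P(X)` of `V`
is a left multiple of `M(X)`: `P(X) = Q(X) * M(X)` for some matrix polynomial `Q(X)`. -/
theorem annihilator_eq_mul_matrixMinimalPoly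
    {𝔽 : Type*} [Field 𝔽] {n : ℕ}
    (V : ℕ → Fin n → 𝔽)
    (M : Polynomial (Matrix (Fin n) (Fin n) 𝔽)) (m : ℕ)
    (hmonic : M.Monic)
    (hdeg : M.natDegree = m)
    (hann : Annihilates M V)
    (hmin : ∀ P : Polynomial (Matrix (Fin n) (Fin n) 𝔽),
      P ≠ 0 → P.natDegree < m → ¬ Annihilates P V) :
    ∀ P : Polynomial (Matrix (Fin n) (Fin n) 𝔽), Annihilates P V →
      ∃ Q : Polynomial (Matrix (Fin n) (Fin n) 𝔽), P = Q * M := by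
  have key : ∀ d (P : Polynomial (Matrix (Fin n) (Fin n) 𝔽)),
      P.natDegree ≤ d → Annihilates P V → ∃ Q, P = Q * M := by
    intro d
    induction d using Nat.strong_induction_on with
    | _ d ih =>
      intro P hPd hPann
      by_cases hP0 : P = 0
      · exact ⟨0, by simp [hP0]⟩
      by_cases hlt : P.natDegree < m
      · exact absurd hPann (hmin P hP0 hlt)
      push_neg at hlt
      set k := P.natDegree - m with hk
      have hkm : k + m = P.natDegree := by omega
      set T := (monomial k P.leadingCoeff) * M with hT
      have hTdeg : T.natDegree ≤ P.natDegree := by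
        refine natDegree_mul_le.trans ?_
        rw [hdeg]
        exact le_trans (add_le_add (natDegree_monomial_le _) le_rfl) hkm.le
      have hm1 : M.coeff m = 1 := by rw [← hdeg]; exact hmonic.coeff_natDegree
      have hTcoeff : T.coeff P.natDegree = P.leadingCoeff := by
        rw [hT, ← C_mul_X_pow_eq_monomial, mul_assoc, ← hkm, add_comm k m,
          coeff_C_mul, coeff_X_pow_mul, hm1, mul_one]
      have hTann : Annihilates T V := ann_mul V hann _
      set P' := P - T with hP'
      have hP'ann : Annihilates P' V := ann_sub V hPann hTann
      by_cases hP'0 : P' = 0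
      · exact ⟨monomial k P.leadingCoeff, by rw [← hT, ← sub_eq_zero, ← hP']; exact hP'0⟩
      have hP'le : P'.natDegree ≤ P.natDegree :=
        (natDegree_sub_le P T).trans (max_le le_rfl hTdeg)
      have hP'coeff : P'.coeff P.natDegree = 0 := by
        rw [hP', coeff_sub, hTcoeff, Polynomial.leadingCoeff, sub_self]
      have hP'deg : P'.natDegree < P.natDegree := by
        rcases lt_or_eq_of_le hP'le with h | h
        · exact h
        · exact absurd (by rw [Polynomial.leadingCoeff, h]; exact hP'coeff)
            (Polynomial.leadingCoeff_ne_zero.mpr hP'0)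
      obtain ⟨Q', hQ'⟩ := ih P'.natDegree (lt_of_lt_of_le hP'deg hPd) P' le_rfl hP'ann
      refine ⟨Q' + monomial k P.leadingCoeff, ?_⟩
      rw [add_mul, ← hQ', ← hT, hP', sub_add_cancel]
  intro P hP
  exact key P.natDegree P le_rfl hP
end

section
/- Let V : ℕ → 𝔽^n be periodic with period N, and let M(X) = X^m I + ∑_{i=0}^{m-1} A_i X^i be a monic n×n matrix polynomial of degree m that annihilates V such that no nonzero n×n matrix polynomial of degree strictly less than m annihilates V (the matrix minimal polynomial of V). Then the constant coefficient A_0 = M(0) is an invertible (non-singular) matrix. -/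
open Polynomial Matrix

/-- If `V` is periodic with period `N` and `M(X)` is its matrix minimal polynomial (a
monic annihilating matrix polynomial of degree `m` such that no nonzero matrix polynomial
of degree `< m` annihilates `V`), then the constant coefficient `A₀ = M(0)` of `M(X)` is
a non-singular (invertible) matrix. -/
theorem matrixMinimalPoly_constantCoeff_isUnit
    {𝔽 : Type*} [Field 𝔽] {n : ℕ}
    (V : ℕ → Fin n → 𝔽) (N : ℕ) (hN : 0 < N)
    (hper : ∀ k : ℕ, V (k + N) = V k)
    (M : Polynomial (Matrix (Fin n) (Fin n) 𝔽)) (m : ℕ)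
    (hmonic : M.Monic)
    (hdeg : M.natDegree = m)
    (hann : Annihilates M V)
    (hmin : ∀ P : Polynomial (Matrix (Fin n) (Fin n) 𝔽),
      P ≠ 0 → P.natDegree < m → ¬ Annihilates P V) :
    IsUnit (M.coeff 0) := by
  by_contra hA
  -- m ≥ 1
  have hm1 : 1 ≤ m := by
    rcases Nat.eq_zero_or_pos m with h0 | h; swap; · exact h
    exfalso; apply hA
    have h1 : M.coeff 0 = 1 := by
      rw [show (0 : ℕ) = M.natDegree from (hdeg.trans h0).symm]
      exact hmonic.coeff_natDegree
    rw [h1]; exact isUnit_one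
  -- A₀ singular, get left null vector
  have hdet : (M.coeff 0).det = 0 := by
    by_contra hd
    exact hA ((Matrix.isUnit_iff_isUnit_det _).2 (isUnit_iff_ne_zero.2 hd))
  obtain ⟨v, hv, hvA⟩ := (Matrix.exists_vecMul_eq_zero_iff).2 hdet
  set Cm : Matrix (Fin n) (Fin n) 𝔽 := Matrix.of fun _ j => v j with hCm
  have hC0 : Cm * M.coeff 0 = 0 := by
    ext i j
    have := congrFun hvA j
    simpa [Cm, Matrix.mul_apply, Matrix.vecMul, dotProduct] using this
  obtain ⟨j0, hj0⟩ := Function.ne_iff.1 hv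
  have hCne : Cm ≠ 0 := by
    intro h
    exact hj0 (by simpa [Cm] using congrFun (congrFun h j0) j0)
  -- define Q
  set Q : Polynomial (Matrix (Fin n) (Fin n) 𝔽) :=
    ∑ i ∈ Finset.range m, Polynomial.C (Cm * M.coeff (i + 1)) * Polynomial.X ^ i with hQ
  have hQcoeff : ∀ k, Q.coeff k = if k < m then Cm * M.coeff (k + 1) else 0 := by
    intro k
    rw [hQ, Polynomial.finset_sum_coeff]
    simp only [Polynomial.coeff_C_mul, Polynomial.coeff_X_pow, mul_ite, mul_one, mul_zero]
    simp [Finset.sum_ite_eq, Finset.mem_range]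
  have hQtop : Q.coeff (m - 1) = Cm := by
    rw [hQcoeff]
    have : m - 1 + 1 = m := Nat.succ_pred_eq_of_pos hm1
    rw [if_pos (by omega), this, ← hdeg, hmonic.coeff_natDegree, mul_one]
  have hQne : Q ≠ 0 := fun h => hCne (by rw [← hQtop, h, Polynomial.coeff_zero])
  have hQdeg : Q.natDegree < m := by
    rw [Polynomial.natDegree_lt_iff_degree_lt hQne]
    rw [Polynomial.degree_lt_iff_coeff_zero]
    intro k hk
    rw [hQcoeff, if_neg]
    exact fun h => absurd hk (by exact_mod_cast not_le.2 (Nat.cast_lt.2 h))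
  -- Q annihilates V
  have hQann : Annihilates Q V := by
    intro j
    have hext : ∑ i ∈ Finset.range (Q.natDegree + 1), Q.coeff i *ᵥ V (i + j)
        = ∑ i ∈ Finset.range m, Q.coeff i *ᵥ V (i + j) := by
      apply Finset.sum_subset
      · exact Finset.range_subset_range.2 hQdeg
      · intro i _ hi
        have : Q.natDegree < i := by simp [Finset.mem_range] at hi; omega
        rw [Polynomial.coeff_eq_zero_of_natDegree_lt this, Matrix.zero_mulVec]
    rw [hext]
    set j' := j + (N - 1) with hj'
    have hNj : ∀ i, i + 1 + j' = i + j + N := by intro i; omega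
    have key : ∑ i ∈ Finset.range m, Q.coeff i *ᵥ V (i + j)
        = ∑ i ∈ Finset.range m, Cm *ᵥ (M.coeff (i + 1) *ᵥ V (i + 1 + j')) := by
      apply Finset.sum_congr rfl
      intro i hi
      rw [hQcoeff, if_pos (Finset.mem_range.1 hi), ← Matrix.mulVec_mulVec,
        hNj i, hper (i + j)]
    rw [key]
    have hsum : ∑ i ∈ Finset.range m, Cm *ᵥ (M.coeff (i + 1) *ᵥ V (i + 1 + j'))
        = Cm *ᵥ (∑ i ∈ Finset.range m, M.coeff (i + 1) *ᵥ V (i + 1 + j')) := by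
      simp only [← Matrix.mulVecLin_apply]
      exact (map_sum (Matrix.mulVecLin Cm) _ _).symm
    rw [hsum]
    have hfull := hann j'
    rw [hdeg, Finset.sum_range_succ'] at hfull
    have : ∑ i ∈ Finset.range m, M.coeff (i + 1) *ᵥ V (i + 1 + j')
        = -(M.coeff 0 *ᵥ V (0 + j')) := by
      rw [eq_neg_iff_add_eq_zero]; exact hfull
    rw [this]
    rw [Matrix.mulVec_neg, Matrix.mulVec_mulVec, hC0, Matrix.zero_mulVec, neg_zero]
  exact hmin Q hQne hQdeg hQann
end

section
/- Let V : ℕ → 𝔽^n be a sequence whose scalar minimal polynomial has degree m (the linear complexity LC of V). Suppose there exists a monic n×n matrix polynomial M(X) of degree d < m that annihilates V and such that no nonzero n×n matrix polynomial of degree strictly less than d annihilates V (a nontrivial matrix minimal polynomial of V, whose degree d is the word linear complexity WLC). Then m = n·d, i.e., LC = n·WLC. -/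
open Polynomial Matrix

/-- For a monic scalar polynomial `p`, annihilation of `V` by `p·I` is the scalar
recurrence condition. -/
lemma annihilates_map_iff {𝔽 : Type*} [Field 𝔽] {n : ℕ} (hn : 0 < n)
    (p : Polynomial 𝔽) (hp : p.Monic) (V : ℕ → Fin n → 𝔽) :
    Annihilates (p.map (algebraMap 𝔽 (Matrix (Fin n) (Fin n) 𝔽))) V ↔
      ∀ j : ℕ, ∑ s ∈ Finset.range (p.natDegree + 1), p.coeff s • V (s + j) = 0 := by
  haveI : NeZero n := ⟨hn.ne'⟩
  have hne : (algebraMap 𝔽 (Matrix (Fin n) (Fin n) 𝔽)) p.leadingCoeff ≠ 0 := by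
    rw [hp.leadingCoeff, _root_.map_one]
    exact one_ne_zero
  have hdeg : (p.map (algebraMap 𝔽 (Matrix (Fin n) (Fin n) 𝔽))).natDegree = p.natDegree :=
    Polynomial.natDegree_map_of_leadingCoeff_ne_zero _ hne
  unfold Annihilates
  rw [hdeg]
  refine forall_congr' fun j => ?_
  have hterm : ∀ i ∈ Finset.range (p.natDegree + 1),
      (p.map (algebraMap 𝔽 (Matrix (Fin n) (Fin n) 𝔽))).coeff i *ᵥ V (i + j)
        = p.coeff i • V (i + j) := by
    intro i _
    rw [Polynomial.coeff_map, Algebra.algebraMap_eq_smul_one, Matrix.smul_mulVec,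
      Matrix.one_mulVec]
  rw [Finset.sum_congr rfl hterm]

lemma dotProduct_finset_sum {𝔽 : Type*} [Field 𝔽] {n : ℕ} {β : Type*}
    (c : Fin n → 𝔽) (s : Finset β) (f : β → Fin n → 𝔽) :
    ∑ x ∈ s, c ⬝ᵥ f x = c ⬝ᵥ ∑ x ∈ s, f x := by
  simp only [dotProduct, Finset.sum_apply, Finset.mul_sum]
  exact Finset.sum_comm

/-- Let `V : ℕ → 𝔽ⁿ` have scalar minimal polynomial `q(X)` of degree `m` (the linear
complexity `LC`).  If there is a nontrivial matrix minimal polynomial `M(X)` of `V`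
(monic, of degree `d < m`, annihilating `V`, with no nonzero matrix polynomial of degree
`< d` annihilating `V`; `d` is the word linear complexity `WLC`), then `m = n·d`, i.e.
`LC = n·WLC`. -/
theorem LC_eq_n_mul_WLC
    {𝔽 : Type*} [Field 𝔽] {n : ℕ} (hn : 0 < n)
    (V : ℕ → Fin n → 𝔽)
    (q : Polynomial 𝔽) (m : ℕ)
    (hq : q.Monic)
    (hqdeg : q.natDegree = m)
    (hqann : Annihilates (q.map (algebraMap 𝔽 (Matrix (Fin n) (Fin n) 𝔽))) V)
    (hqmin : ∀ p : Polynomial 𝔽, p.Monic →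
      Annihilates (p.map (algebraMap 𝔽 (Matrix (Fin n) (Fin n) 𝔽))) V → m ≤ p.natDegree)
    (M : Polynomial (Matrix (Fin n) (Fin n) 𝔽)) (d : ℕ)
    (hmonic : M.Monic)
    (hdeg : M.natDegree = d)
    (hdm : d < m)
    (hann : Annihilates M V)
    (hmin : ∀ P : Polynomial (Matrix (Fin n) (Fin n) 𝔽),
      P ≠ 0 → P.natDegree < d → ¬ Annihilates P V) :
    m = n * d := by
  classical
  haveI : NeZero n := ⟨hn.ne'⟩
  -- `d` is positive
  have hd : 0 < d := by
    rcases Nat.eq_zero_or_pos d with h0 | h; swap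
    · exact h
    exfalso
    have hM0 : M.coeff 0 = 1 := by
      have := hmonic.coeff_natDegree
      rwa [hdeg, h0] at this
    have hV0 : ∀ j, V j = 0 := by
      intro j
      have h := hann j
      rw [hdeg, h0] at h
      simpa [hM0] using h
    have hone : Annihilates ((1 : Polynomial 𝔽).map
        (algebraMap 𝔽 (Matrix (Fin n) (Fin n) 𝔽))) V := by
      rw [annihilates_map_iff hn 1 monic_one V]
      intro j
      simp [hV0]
    have := hqmin 1 monic_one hone
    simp only [Polynomial.natDegree_one] at this
    omega
  have hm : 0 < m := lt_of_le_of_lt (Nat.zero_le d) hdm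
  -- the scalar recurrence from `q`
  have hqz : ∀ j, ∑ s ∈ Finset.range (m + 1), q.coeff s • V (s + j) = 0 := by
    have h := (annihilates_map_iff hn q hq V).mp hqann
    rwa [hqdeg] at h
  have hqm : q.coeff m = 1 := by rw [← hqdeg]; exact hq.coeff_natDegree
  -- the matrix recurrence from `M`
  have hMd : M.coeff d = 1 := by rw [← hdeg]; exact hmonic.coeff_natDegree
  have hrec : ∀ j, V (j + d) = -∑ i : Fin d, M.coeff i *ᵥ V (j + i) := by
    intro j
    have h := hann j
    rw [hdeg, Finset.sum_range_succ, hMd, Matrix.one_mulVec] at h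
    have h2 : V (j + d) = -∑ i ∈ Finset.range d, M.coeff i *ᵥ V (i + j) := by
      have : V (d + j) = -∑ i ∈ Finset.range d, M.coeff i *ᵥ V (i + j) :=
        eq_neg_of_add_eq_zero_right h
      rwa [Nat.add_comm d j] at this
    rw [h2, Fin.sum_univ_eq_sum_range (fun i => M.coeff i *ᵥ V (j + i)) d]
    congr 1
    refine Finset.sum_congr rfl fun i _ => ?_
    rw [Nat.add_comm i j]
  ------------------------------------------------------------------
  -- Part A : m ≤ d * n  via the block companion endomorphism
  ------------------------------------------------------------------
  have hA : m ≤ d * n := by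
    let Tf : (Fin d → Fin n → 𝔽) → (Fin d → Fin n → 𝔽) := fun s k =>
      if h : (k : ℕ) + 1 < d then s ⟨(k : ℕ) + 1, h⟩ else -∑ i : Fin d, M.coeff i *ᵥ s i
    have Tadd : ∀ s t : Fin d → Fin n → 𝔽, Tf (s + t) = Tf s + Tf t := by
      intro s t; funext k
      show Tf (s + t) k = Tf s k + Tf t k
      simp only [Tf]
      split_ifs with h
      · rfl
      · rw [← neg_add, ← Finset.sum_add_distrib]
        congr 1
        refine Finset.sum_congr rfl fun i _ => ?_
        show M.coeff i *ᵥ (s i + t i) = _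
        rw [Matrix.mulVec_add]
    have Tsmul : ∀ (a : 𝔽) (s : Fin d → Fin n → 𝔽), Tf (a • s) = a • Tf s := by
      intro a s; funext k
      show Tf (a • s) k = a • Tf s k
      simp only [Tf]
      split_ifs with h
      · rfl
      · rw [smul_neg, Finset.smul_sum]
        congr 1
        refine Finset.sum_congr rfl fun i _ => ?_
        show M.coeff i *ᵥ (a • s i) = _
        rw [Matrix.mulVec_smul]
    let T : (Fin d → Fin n → 𝔽) →ₗ[𝔽] (Fin d → Fin n → 𝔽) := { toFun := Tf, map_add' := Tadd, map_smul' := Tsmul }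
    let S : ℕ → Fin d → Fin n → 𝔽 := fun j k => V (j + (k : ℕ))
    have hS : ∀ j, S (j + 1) = T (S j) := by
      intro j; funext k
      show S (j + 1) k = Tf (S j) k
      by_cases h : (k : ℕ) + 1 < d
      · simp only [Tf, dif_pos h, S]
        show V (j + 1 + (k : ℕ)) = V (j + ((k : ℕ) + 1))
        have e : j + 1 + (k : ℕ) = j + ((k : ℕ) + 1) := by omega
        rw [e]
      · have hk : (k : ℕ) = d - 1 := by have := k.isLt; omega
        simp only [Tf, dif_neg h, S]
        have hjk : j + 1 + (k : ℕ) = j + d := by omega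
        rw [hjk, hrec j]
    have hpow : ∀ (i j : ℕ), (T ^ i) (S j) = S (j + i) := by
      intro i
      induction i with
      | zero => intro j; simp
      | succ i ih =>
        intro j
        rw [pow_succ, Module.End.mul_apply]
        have : T (S j) = S (j + 1) := (hS j).symm
        rw [this, ih]
        have e : j + 1 + i = j + (i + 1) := by omega
        rw [e]
    have hχmonic : (LinearMap.charpoly T).Monic := LinearMap.charpoly_monic T
    have hχdeg : (LinearMap.charpoly T).natDegree = d * n := by
      rw [LinearMap.charpoly_natDegree]
      rw [Module.finrank_pi_fintype 𝔽]
      simp [Module.finrank_fintype_fun_eq_card]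
    have hχz : ∀ j, ∑ i ∈ Finset.range ((LinearMap.charpoly T).natDegree + 1),
        (LinearMap.charpoly T).coeff i • V (i + j) = 0 := by
      intro j
      have h0 : (Polynomial.aeval T (LinearMap.charpoly T)) (S j) = 0 := by
        rw [LinearMap.aeval_self_charpoly]; rfl
      rw [Polynomial.aeval_eq_sum_range] at h0
      have h1 : ∑ i ∈ Finset.range ((LinearMap.charpoly T).natDegree + 1),
          (LinearMap.charpoly T).coeff i • S (j + i) = 0 := by
        rw [← h0]
        rw [LinearMap.coe_sum, Finset.sum_apply]
        refine (Finset.sum_congr rfl fun i _ => ?_).symm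
        rw [LinearMap.smul_apply, hpow i j]
      have h2 := congrFun (congrFun h1 ⟨0, hd⟩) -- evaluate componentwise below
      -- extract the first block component
      have h3 : ∑ i ∈ Finset.range ((LinearMap.charpoly T).natDegree + 1),
          (LinearMap.charpoly T).coeff i • V (j + i) = 0 := by
        funext a
        have h4 := congrFun (congrFun h1 ⟨0, hd⟩) a
        simpa [S, Finset.sum_apply] using h4
      rw [← h3]
      refine Finset.sum_congr rfl fun i _ => ?_
      rw [Nat.add_comm i j]
    have hannχ : Annihilates ((LinearMap.charpoly T).map
        (algebraMap 𝔽 (Matrix (Fin n) (Fin n) 𝔽))) V :=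
      (annihilates_map_iff hn _ hχmonic V).mpr hχz
    have := hqmin _ hχmonic hannχ
    rwa [hχdeg] at this
  ------------------------------------------------------------------
  -- Part B : d * n ≤ m  via injectivity on low-degree coefficient tuples
  ------------------------------------------------------------------
  have key : ∀ c : Fin d → Fin n → 𝔽,
      (∀ t : Fin m, ∑ i : Fin d, c i ⬝ᵥ V ((i : ℕ) + (t : ℕ)) = 0) → c = 0 := by
    intro c hc
    by_contra hc0
    set w : ℕ → 𝔽 := fun t => ∑ i : Fin d, c i ⬝ᵥ V ((i : ℕ) + t) with hw
    have hwrec : ∀ j, ∑ s ∈ Finset.range (m + 1), q.coeff s • w (s + j) = 0 := by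
      intro j
      have h1 : ∀ s ∈ Finset.range (m + 1),
          q.coeff s • w (s + j) = ∑ i : Fin d, c i ⬝ᵥ (q.coeff s • V (s + ((i : ℕ) + j))) := by
        intro s _
        rw [hw]
        rw [Finset.smul_sum]
        refine Finset.sum_congr rfl fun i _ => ?_
        rw [dotProduct_smul]
        have e : (i : ℕ) + (s + j) = s + ((i : ℕ) + j) := by omega
        rw [e]
      rw [Finset.sum_congr rfl h1, Finset.sum_comm]
      refine Finset.sum_eq_zero fun i _ => ?_
      have h2 : ∑ s ∈ Finset.range (m + 1), c i ⬝ᵥ (q.coeff s • V (s + ((i : ℕ) + j)))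
          = c i ⬝ᵥ ∑ s ∈ Finset.range (m + 1), q.coeff s • V (s + ((i : ℕ) + j)) := by
        rw [dotProduct_finset_sum]
      rw [h2, hqz ((i : ℕ) + j), dotProduct_zero]
    have hwall : ∀ t, w t = 0 := by
      intro t
      induction t using Nat.strong_induction_on with
      | _ t ih =>
        by_cases htm : t < m
        · exact hc ⟨t, htm⟩
        · have h := hwrec (t - m)
          rw [Finset.sum_range_succ, hqm, one_smul] at h
          have hmt : m + (t - m) = t := by omega
          rw [hmt] at h
          have h5 : w t = -∑ s ∈ Finset.range m, q.coeff s • w (s + (t - m)) :=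
            eq_neg_of_add_eq_zero_right h
          rw [h5]
          have h6 : ∀ s ∈ Finset.range m, q.coeff s • w (s + (t - m)) = 0 := by
            intro s hs
            rw [Finset.mem_range] at hs
            rw [ih (s + (t - m)) (by omega), smul_zero]
          rw [Finset.sum_congr rfl h6, Finset.sum_const_zero, neg_zero]
    -- build a nonzero annihilating matrix polynomial of degree < d
    let r0 : Fin n := ⟨0, hn⟩
    let cc : ℕ → Fin n → 𝔽 := fun i => if h : i < d then c ⟨i, h⟩ else 0
    let A : ℕ → Matrix (Fin n) (Fin n) 𝔽 := fun i =>
      Matrix.of fun a b => if a = r0 then cc i b else 0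
    let P : Polynomial (Matrix (Fin n) (Fin n) 𝔽) :=
      ∑ i ∈ Finset.range d, Polynomial.C (A i) * Polynomial.X ^ i
    have hPcoeff : ∀ s : ℕ, P.coeff s = if s < d then A s else 0 := by
      intro s
      rw [Polynomial.finset_sum_coeff]
      simp only [Polynomial.coeff_C_mul, Polynomial.coeff_X_pow, mul_ite, mul_one, mul_zero]
      rw [Finset.sum_ite_eq (Finset.range d) s A]
      simp [Finset.mem_range]
    have hP0 : P ≠ 0 := by
      obtain ⟨i0, hi0⟩ : ∃ i, c i ≠ 0 := by
        by_contra hall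
        push_neg at hall
        exact hc0 (funext hall)
      obtain ⟨b, hb⟩ : ∃ b, c i0 b ≠ 0 := by
        by_contra hall
        push_neg at hall
        exact hi0 (funext hall)
      intro hP
      have hz0 : P.coeff i0 = 0 := by rw [hP]; simp
      rw [hPcoeff, if_pos i0.isLt] at hz0
      have hz : A (i0 : ℕ) r0 b = 0 := by rw [hz0]; rfl
      have hAe : A (i0 : ℕ) r0 b = c i0 b := by
        simp [A, cc, i0.isLt]
      exact hb (hAe.symm.trans hz)
    have hPdeg : P.natDegree < d := by
      rw [Polynomial.natDegree_lt_iff_degree_lt hP0]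
      rw [Polynomial.degree_lt_iff_coeff_zero]
      intro s hs
      rw [hPcoeff, if_neg (by exact_mod_cast Nat.not_lt.mpr (by exact_mod_cast hs))]
    have hPann : Annihilates P V := by
      intro j
      have hsub : ∑ i ∈ Finset.range (P.natDegree + 1), P.coeff i *ᵥ V (i + j)
          = ∑ i ∈ Finset.range d, P.coeff i *ᵥ V (i + j) := by
        refine Finset.sum_subset ?_ ?_
        · exact Finset.range_subset_range.mpr (by omega)
        · intro x _ hx
          rw [Finset.mem_range, not_lt] at hx
          rw [Polynomial.coeff_eq_zero_of_natDegree_lt (by omega), Matrix.zero_mulVec]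
      rw [hsub]
      funext a
      rw [Finset.sum_apply]
      by_cases ha : a = r0
      · have hterm : ∀ i ∈ Finset.range d,
            (P.coeff i *ᵥ V (i + j)) a = cc i ⬝ᵥ V (i + j) := by
          intro i hi
          rw [Finset.mem_range] at hi
          rw [hPcoeff, if_pos hi]
          simp [Matrix.mulVec, A, ha, dotProduct]
        rw [Finset.sum_congr rfl hterm]
        have hfin : ∑ i ∈ Finset.range d, cc i ⬝ᵥ V (i + j)
            = ∑ i : Fin d, c i ⬝ᵥ V ((i : ℕ) + j) := by
          rw [← Fin.sum_univ_eq_sum_range (fun i => cc i ⬝ᵥ V (i + j)) d]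
          refine Finset.sum_congr rfl fun i _ => ?_
          congr 1
          simp [cc, i.isLt]
        rw [hfin]
        have := hwall j
        rw [hw] at this
        simpa using this
      · have hterm : ∀ i ∈ Finset.range d, (P.coeff i *ᵥ V (i + j)) a = 0 := by
          intro i hi
          rw [Finset.mem_range] at hi
          rw [hPcoeff, if_pos hi]
          simp [Matrix.mulVec, A, ha, dotProduct]
        rw [Finset.sum_congr rfl hterm, Finset.sum_const_zero]
        rfl
    exact hmin P hP0 hPdeg hPann
  -- package as an injective linear map
  have hB : d * n ≤ m := by
    let Ψ : (Fin d → Fin n → 𝔽) →ₗ[𝔽] (Fin m → 𝔽) :=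
      { toFun := fun c t => ∑ i : Fin d, c i ⬝ᵥ V ((i : ℕ) + (t : ℕ))
        map_add' := by
          intro c c'; funext t
          simp [add_dotProduct, Finset.sum_add_distrib]
        map_smul' := by
          intro a c; funext t
          simp [smul_dotProduct, Finset.smul_sum, Finset.mul_sum] }
    have hinj : Function.Injective Ψ := by
      intro c c' hcc
      have h0 : Ψ (c - c') = 0 := by rw [map_sub, hcc, sub_self]
      have h1 : ∀ t : Fin m, ∑ i : Fin d, (c - c') i ⬝ᵥ V ((i : ℕ) + (t : ℕ)) = 0 :=
        fun t => congrFun h0 t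
      have := key (c - c') h1
      exact sub_eq_zero.mp this
    have hfr := LinearMap.finrank_le_finrank_of_injective hinj
    rwa [Module.finrank_pi_fintype 𝔽, Module.finrank_fintype_fun_eq_card,
      Fintype.card_fin, Finset.sum_const, Finset.card_univ, Fintype.card_fin,
      Module.finrank_fintype_fun_eq_card, Fintype.card_fin, smul_eq_mul] at hfr
  have : m = d * n := le_antisymm hA hB
  rw [this, Nat.mul_comm]
end
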